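/- If S and T are bounded self-adjoint operators on a Hilbert space, then the Hausdorff distance between their spectra is at most the operator norm ‖S − T‖. -/

import Mathlib

/-! For a normal element `a` of a C⋆-algebra the continuous functional calculus gives
`‖(z - a)⁻¹‖ ≤ 1 / dist(z, σ(a))`. Hence if `dist(z, σ(a)) > ‖b - a‖`, then
`z - b = (z - a) + (a - b)` is a small perturbation of a unit, so `z ∉ σ(b)`. Every point of
`σ(b)` thus lies within `‖b - a‖` of `σ(a)`, and by symmetry for self-adjoint `a`, `b` the Hausdorff
distance of the spectra is at most `‖a - b‖`. -/

open Metric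

namespace IsStarNormal

variable {A : Type*} [CStarAlgebra A]

theorem norm_resolvent_le_inv_infDist (a : A) [IsStarNormal a] (z : ℂ) :
    ‖resolvent a z‖ ≤ (infDist z (spectrum ℂ a))⁻¹ := by
  by_cases hz : z ∈ spectrum ℂ a
  · rw [infDist_zero_of_mem hz, inv_zero, resolvent, Ring.inverse_non_unit _ hz, norm_zero]
  have hne : ∀ x ∈ spectrum ℂ a, z - x ≠ 0 := fun x hx h ↦ hz (sub_eq_zero.mp h ▸ hx)
  have hres : resolvent a z = cfc (fun x : ℂ ↦ (z - x)⁻¹) a := by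
    have hsub : cfc (fun x : ℂ ↦ z - x) a = algebraMap ℂ A z - a := by
      rw [cfc_sub (fun _ : ℂ ↦ z) (fun x : ℂ ↦ x) a, cfc_const z a, cfc_id' ℂ a]
    rw [resolvent, ← hsub]
    exact Ring.inverse_unit (cfcUnits (fun x : ℂ ↦ z - x) a hne)
  rw [hres]
  refine norm_cfc_le (inv_nonneg.mpr infDist_nonneg) fun x hx ↦ ?_
  rw [norm_inv, ← dist_eq_norm]
  exact inv_anti₀ (((spectrum.isClosed a).notMem_iff_infDist_pos
    ⟨x, hx⟩).mp hz) (infDist_le_dist_of_mem hx)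

theorem infDist_spectrum_le_norm_sub (a b : A) [IsStarNormal a] {z : ℂ}
    (hz : z ∈ spectrum ℂ b) : infDist z (spectrum ℂ a) ≤ ‖b - a‖ := by
  nontriviality A
  by_contra! hlt
  have hza : z ∉ spectrum ℂ a := fun h ↦ by
    rw [infDist_zero_of_mem h] at hlt
    exact (norm_nonneg _).not_gt hlt
  obtain ⟨u, hu⟩ := spectrum.notMem_iff.mp hza
  have hinv : ‖(↑u⁻¹ : A)‖ ≤ (infDist z (spectrum ℂ a))⁻¹ := by
    simpa [resolvent, ← hu] using norm_resolvent_le_inv_infDist a z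
  have hsmall : ‖a - b‖ < ‖(↑u⁻¹ : A)‖⁻¹ := by
    rw [norm_sub_rev]
    exact hlt.trans_le (le_inv_of_le_inv₀ (norm_pos_iff.mpr u⁻¹.ne_zero) hinv)
  refine spectrum.notMem_iff.mpr ?_ hz
  simpa [hu] using (u.add (a - b) hsmall).isUnit

end IsStarNormal

theorem stmt_1 {H : Type*} [NormedAddCommGroup H] [InnerProductSpace ℂ H] [CompleteSpace H]
    (S T : H →L[ℂ] H) (hS : IsSelfAdjoint S) (hT : IsSelfAdjoint T) :
    Metric.hausdorffDist (spectrum ℂ S) (spectrum ℂ T) ≤ ‖S - T‖ := by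
  have := hS.isStarNormal
  have := hT.isStarNormal
  refine hausdorffDist_le_of_infDist (norm_nonneg _) (fun z hz ↦ ?_) (fun z hz ↦ ?_)
  · exact IsStarNormal.infDist_spectrum_le_norm_sub T S hz
  · simpa only [norm_sub_rev] using IsStarNormal.infDist_spectrum_le_norm_sub S T hz
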